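/- For σ_R > 0 and k ∈ (0,1), the function x ↦ R(x,σ_R,k) attains its global maximum on ℝ exactly at the two points x = ±σ_R·k·√(2·ln(k²)/(k²−1)); that is, R(x,σ_R,k) ≤ R(x*,σ_R,k) for all x ∈ ℝ with x* = σ_R·k·√(2·ln(k²)/(k²−1)), with equality only for x = ±x*. -/

import Mathlib

/-!
With `a = 1/(2σ²) < b = 1/(2(σk)²)` we have `R x σ k = g (x²)` for `g t = e^{-at} - e^{-bt}`.
The derivative `b e^{-bt} - a e^{-at}` of `g` is positive exactly when `(b - a) t < log (b/a)`,
so `g` has a strict global maximum at `t₀ = log (b/a) / (b - a)`, and `t₀ = x*²`.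
-/

open Real Set

/-- The ring filter: difference of two unnormalized Gaussians. -/
noncomputable def R (x σ k : ℝ) : ℝ :=
  Real.exp (-x ^ 2 / (2 * σ ^ 2)) - Real.exp (-x ^ 2 / (2 * (σ * k) ^ 2))

namespace RingFilter

noncomputable def expSubExp (a b t : ℝ) : ℝ := exp (-(a * t)) - exp (-(b * t))

lemma continuous_expSubExp (a b : ℝ) : Continuous (expSubExp a b) := by
  unfold expSubExp
  fun_prop

lemma hasDerivAt_expSubExp (a b t : ℝ) :
    HasDerivAt (expSubExp a b) (b * exp (-(b * t)) - a * exp (-(a * t))) t := by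
  have hexp (c : ℝ) : HasDerivAt (fun t => exp (-(c * t))) (c * exp (-(c * t)) * -1) t := by
    simpa [mul_comm] using ((hasDerivAt_id t).const_mul c).neg.exp
  exact ((hexp a).sub (hexp b)).congr_deriv (by ring)

lemma mul_exp_neg_mul_lt_iff {a b : ℝ} (ha : 0 < a) (hb : 0 < b) (t : ℝ) :
    a * exp (-(a * t)) < b * exp (-(b * t)) ↔ (b - a) * t < log (b / a) := by
  have hexp {c : ℝ} (hc : 0 < c) : c * exp (-(c * t)) = exp (log c - c * t) := by
    rw [sub_eq_add_neg, exp_add, exp_log hc]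
  rw [hexp ha, hexp hb, exp_lt_exp, log_div hb.ne' ha.ne']
  constructor <;> intro h <;> linarith

lemma expSubExp_lt_of_ne {a b : ℝ} (ha : 0 < a) (hab : a < b) {t : ℝ}
    (ht : t ≠ log (b / a) / (b - a)) :
    expSubExp a b t < expSubExp a b (log (b / a) / (b - a)) := by
  set t₀ := log (b / a) / (b - a)
  have hb : 0 < b := ha.trans hab
  have hba : 0 < b - a := sub_pos.2 hab
  have ht₀ : (b - a) * t₀ = log (b / a) := mul_div_cancel₀ _ hba.ne'
  rcases ht.lt_or_gt with h | h
  · refine strictMonoOn_of_deriv_pos (convex_Iic t₀) (continuous_expSubExp a b).continuousOn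
      (fun s hs => ?_) (mem_Iic.2 h.le) self_mem_Iic h
    rw [interior_Iic] at hs
    rw [(hasDerivAt_expSubExp a b s).deriv, sub_pos, mul_exp_neg_mul_lt_iff ha hb, ← ht₀]
    exact mul_lt_mul_of_pos_left hs hba
  · refine strictAntiOn_of_deriv_neg (convex_Ici t₀) (continuous_expSubExp a b).continuousOn
      (fun s hs => ?_) self_mem_Ici (mem_Ici.2 h.le) h
    rw [interior_Ici] at hs
    rw [(hasDerivAt_expSubExp a b s).deriv, sub_neg, mul_exp_neg_mul_lt_iff hb ha,
      ← inv_div, log_inv, ← ht₀]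
    linarith [mul_lt_mul_of_pos_left hs hba]

lemma R_eq_expSubExp (x σ k : ℝ) :
    R x σ k = expSubExp (1 / (2 * σ ^ 2)) (1 / (2 * (σ * k) ^ 2)) (x ^ 2) := by
  unfold R expSubExp
  ring_nf

lemma sq_ringPeak {σ k : ℝ} (hσ : σ ≠ 0) (hk : k ∈ Ioo (0 : ℝ) 1) :
    (σ * k * √(2 * log (k ^ 2) / (k ^ 2 - 1))) ^ 2 =
      log ((1 / (2 * (σ * k) ^ 2)) / (1 / (2 * σ ^ 2))) /
        (1 / (2 * (σ * k) ^ 2) - 1 / (2 * σ ^ 2)) := by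
  obtain ⟨hk0, hk1⟩ := hk
  have hk2 : k ^ 2 < 1 := pow_lt_one₀ hk0.le hk1 two_ne_zero
  have hlog : log (k ^ 2) < 0 := log_neg (by positivity) hk2
  have hratio : (1 / (2 * (σ * k) ^ 2)) / (1 / (2 * σ ^ 2)) = (k ^ 2)⁻¹ := by
    field_simp
  rw [mul_pow, sq_sqrt (div_nonneg_of_nonpos (by linarith) (by linarith)), hratio, log_inv]
  have : 1 - k ^ 2 ≠ 0 := by linarith
  have : k ^ 2 - 1 ≠ 0 := by linarith
  field_simp
  ring

lemma R_lt_ringPeak {σ k : ℝ} (hσ : 0 < σ) (hk : k ∈ Ioo (0 : ℝ) 1) {x : ℝ}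
    (hx : x ^ 2 ≠ (σ * k * √(2 * log (k ^ 2) / (k ^ 2 - 1))) ^ 2) :
    R x σ k < R (σ * k * √(2 * log (k ^ 2) / (k ^ 2 - 1))) σ k := by
  have ha : 0 < 1 / (2 * σ ^ 2) := by positivity
  have hab : 1 / (2 * σ ^ 2) < 1 / (2 * (σ * k) ^ 2) := by
    refine one_div_lt_one_div_of_lt (by have := hk.1; positivity) ?_
    nlinarith [pow_lt_one₀ hk.1.le hk.2 two_ne_zero, pow_pos hσ 2]
  rw [sq_ringPeak hσ.ne' hk] at hx
  rw [R_eq_expSubExp, R_eq_expSubExp, sq_ringPeak hσ.ne' hk]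
  exact expSubExp_lt_of_ne ha hab hx

end RingFilter

open RingFilter in
theorem R_global_max (σ k : ℝ) (hσ : 0 < σ) (hk : k ∈ Set.Ioo (0 : ℝ) 1) :
    (∀ x : ℝ, R x σ k ≤ R (σ * k * Real.sqrt (2 * Real.log (k ^ 2) / (k ^ 2 - 1))) σ k) ∧
    ∀ x : ℝ, R x σ k = R (σ * k * Real.sqrt (2 * Real.log (k ^ 2) / (k ^ 2 - 1))) σ k →
      x = σ * k * Real.sqrt (2 * Real.log (k ^ 2) / (k ^ 2 - 1)) ∨
      x = -(σ * k * Real.sqrt (2 * Real.log (k ^ 2) / (k ^ 2 - 1))) := by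
  refine ⟨fun x => ?_, fun x hx => ?_⟩
  · by_cases hsq : x ^ 2 = (σ * k * √(2 * log (k ^ 2) / (k ^ 2 - 1))) ^ 2
    · rw [R_eq_expSubExp, R_eq_expSubExp, hsq]
    · exact (R_lt_ringPeak hσ hk hsq).le
  · refine sq_eq_sq_iff_eq_or_eq_neg.1 (not_not.1 fun hsq => ?_)
    exact (R_lt_ringPeak hσ hk hsq).ne hx
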